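/- arXiv:0806.4499 — 4 statements merged into one kernel-verified Lean document; each statement's English description precedes it below -/
import Mathlib

section
/- Let X be a compact Hausdorff space such that for every closed set F ⊆ X there exist a compact metrizable space Y and a continuous surjection g : X → Y such that the restriction of g to g⁻¹(g(F)) is an irreducible map onto g(F). Then every closed subset of X is a Gδ set and is separable; consequently X is hereditarily Lindelöf and hereditarily separable. -/
/-!
Fix a closed `F` and the map `g : X → Y` provided for it. Irreducibility on the saturation
`g⁻¹(g F)` forces `F = g⁻¹(g F)`, so `F` is the preimage of the closed, hence Gδ, set `g F` of the
metrizable space `Y`. It also makes `g` irreducible on `F` itself; lifting a countable dense subset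
of `g F` to a countable `T ⊆ F` gives a closed set `closure T ⊆ F` that still maps onto `g F`, so
`closure T = F`. Since every closed set is a Gδ, every open set of the compact space `X` is a
countable union of compact sets, hence Lindelöf.
-/

open Set TopologicalSpace

def IrreducibleOn {X Y : Type*} [TopologicalSpace X] (g : X → Y) (A : Set X) : Prop :=
  ∀ C ⊆ A, IsClosed C → g '' C = g '' A → C = A

section

variable {X Y : Type*} [TopologicalSpace X] {g : X → Y} {F : Set X}

theorem IrreducibleOn.preimage_image_eq (hg : Function.Surjective g)
    (h : IrreducibleOn g (g ⁻¹' (g '' F))) (hF : IsClosed F) : g ⁻¹' (g '' F) = F :=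
  (h F (subset_preimage_image g F) hF (image_preimage_eq _ hg).symm).symm

theorem IrreducibleOn.isSeparable [CompactSpace X] [TopologicalSpace Y] [MetrizableSpace Y]
    (hirr : IrreducibleOn g F) (hg : Continuous g) (hF : IsClosed F)
    (hgF : IsSeparable (g '' F)) : IsSeparable F := by
  obtain ⟨D, hDF, hDc, hFD⟩ := hgF.exists_countable_dense_subset
  have : Countable D := hDc.to_subtype
  choose lift hliftF hlift using fun y : D => hDF y.2
  have hclosure : closure (range lift) ⊆ F :=
    hF.closure_subset_iff.2 (range_subset_iff.2 hliftF)
  have himage : g '' closure (range lift) = g '' F := by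
    refine (image_mono hclosure).antisymm (hFD.trans ?_)
    refine ((isClosed_closure.isCompact.image hg).isClosed).closure_subset_iff.2 ?_
    intro y hy
    exact ⟨lift ⟨y, hy⟩, subset_closure (mem_range_self _), hlift _⟩
  refine ⟨range lift, countable_range lift, ?_⟩
  rw [← hirr _ hclosure isClosed_closure himage]

end

theorem HereditarilyLindelofSpace.of_forall_isClosed_isGδ {X : Type*} [TopologicalSpace X]
    [LindelofSpace X] (h : ∀ F : Set X, IsClosed F → IsGδ F) : HereditarilyLindelofSpace X := by
  refine .of_forall_isOpen fun U hU => ?_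
  obtain ⟨V, hVo, hV⟩ := (h Uᶜ hU.isClosed_compl).eq_iInter_nat
  have hUV : U = ⋃ n, (V n)ᶜ := by rw [← compl_iInter, ← hV, compl_compl]
  rw [hUV]
  exact isLindelof_iUnion fun n => (hVo n).isClosed_compl.isLindelof

theorem stmt4_general {X : Type*} [TopologicalSpace X] [CompactSpace X]
    (h : ∀ F : Set X, IsClosed F →
      ∃ (Y : Type) (_ : TopologicalSpace Y), CompactSpace Y ∧ MetrizableSpace Y ∧
        ∃ g : X → Y, Continuous g ∧ Function.Surjective g ∧
          (∀ C ⊆ g ⁻¹' (g '' F), IsClosed C → g '' C = g '' F →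
            C = g ⁻¹' (g '' F))) :
    (∀ F : Set X, IsClosed F → IsGδ F ∧ IsSeparable F) ∧
    HereditarilyLindelofSpace X ∧
    (∀ S : Set X, IsSeparable S) := by
  have hclosed : ∀ F : Set X, IsClosed F → IsGδ F ∧ IsSeparable F := by
    intro F hF
    obtain ⟨Y, _, _, _, g, hg, hgs, hirr⟩ := h F hF
    have hsat : IrreducibleOn g (g ⁻¹' (g '' F)) := by
      rwa [IrreducibleOn, image_preimage_eq _ hgs]
    have hF_eq := hsat.preimage_image_eq hgs hF
    rw [hF_eq] at hsat
    refine ⟨hF_eq ▸ (hF.isCompact.image hg).isClosed.isGδ.preimage hg, ?_⟩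
    exact hsat.isSeparable hg hF (.of_separableSpace _)
  exact ⟨hclosed, .of_forall_isClosed_isGδ fun F hF => (hclosed F hF).1,
    fun S => isSeparable_closure.1 (hclosed _ isClosed_closure).2⟩

/-- If for every closed `F ⊆ X` there is a compact metrizable `Y` and a continuous
surjection `g : X → Y` whose restriction to `g⁻¹(g(F))` is irreducible onto `g(F)`,
then every closed subset of `X` is a Gδ and separable, and `X` is hereditarily
Lindelöf and hereditarily separable. -/
theorem stmt4 {X : Type*} [TopologicalSpace X] [CompactSpace X] [T2Space X]
    (h : ∀ F : Set X, IsClosed F →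
      ∃ (Y : Type) (_ : TopologicalSpace Y), CompactSpace Y ∧ MetrizableSpace Y ∧
        ∃ g : X → Y, Continuous g ∧ Function.Surjective g ∧
          (∀ C ⊆ g ⁻¹' (g '' F), IsClosed C → g '' C = g '' F →
            C = g ⁻¹' (g '' F))) :
    (∀ F : Set X, IsClosed F → IsGδ F ∧ IsSeparable F) ∧
    HereditarilyLindelofSpace X ∧
    (∀ S : Set X, IsSeparable S) :=
  stmt4_general h
end

section
/- Let X be a compact Hausdorff space, Z a metrizable compact space, and φ : X → Z a continuous surjection such that the set {y ∈ Z : φ⁻¹{y} has more than one point} is countable. Suppose E is an uncountable family of clopen subsets of X totally ordered by strict inclusion, closed under the property that (E, ⊂) is a dense linear order, and D ⊆ E is countable and dense in (E, ⊂), with A = φ⁻¹(φ(A)) for all A ∈ D. Then the images φ(B) for B ∈ E are pairwise distinct. -/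
open Set TopologicalSpace

theorem Set.image_ne_image_of_subset_saturated_ssubset {α β : Type*} {f : α → β}
    {A B B' : Set α} (hA : A = f ⁻¹' (f '' A)) (hBA : B ⊆ A) (hAB' : A ⊂ B') :
    f '' B ≠ f '' B' := by
  intro h
  have hB'A : f '' B' ⊆ f '' A := h ▸ image_mono hBA
  exact hAB'.2 (calc B' ⊆ f ⁻¹' (f '' A) := image_subset_iff.1 hB'A
    _ = A := hA.symm)

theorem exists_mem_le_lt_of_orderDense {α : Type*} [Preorder α] {E D : Set α}
    (hE : ∀ b ∈ E, ∀ b' ∈ E, b < b' → ∃ a ∈ E, b < a ∧ a < b')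
    (hD : ∀ b ∈ E, ∀ b' ∈ E, b < b' → ∃ a ∈ D, b ≤ a ∧ a ≤ b')
    {b b' : α} (hb : b ∈ E) (hb' : b' ∈ E) (hbb' : b < b') :
    ∃ a ∈ D, b ≤ a ∧ a < b' := by
  obtain ⟨c, hcE, hbc, hcb'⟩ := hE b hb b' hb' hbb'
  obtain ⟨a, haD, hba, hac⟩ := hD b hb c hcE hbc
  exact ⟨a, haD, hba, hac.trans_lt hcb'⟩

theorem Set.injOn_image_of_saturated_orderDense {α β : Type*} (f : α → β)
    {E D : Set (Set α)} (hchain : IsChain (· ⊆ ·) E)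
    (hE : ∀ B ∈ E, ∀ B' ∈ E, B ⊂ B' → ∃ A ∈ E, B ⊂ A ∧ A ⊂ B')
    (hD : ∀ B ∈ E, ∀ B' ∈ E, B ⊂ B' → ∃ A ∈ D, B ⊆ A ∧ A ⊆ B')
    (hsat : ∀ A ∈ D, A = f ⁻¹' (f '' A)) :
    E.InjOn (f '' ·) := by
  have image_ne : ∀ B ∈ E, ∀ B' ∈ E, B ⊂ B' → f '' B ≠ f '' B' := fun B hB B' hB' hBB' ↦
    let ⟨A, hAD, hBA, hAB'⟩ := exists_mem_le_lt_of_orderDense hE hD hB hB' hBB'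
    image_ne_image_of_subset_saturated_ssubset (hsat A hAD) hBA hAB'
  intro B hB B' hB' h
  by_contra hne
  rcases hchain hB hB' hne with hBB' | hB'B
  · exact image_ne B hB B' hB' (ssubset_of_subset_of_ne hBB' hne) h
  · exact image_ne B' hB' B hB (ssubset_of_subset_of_ne hB'B (Ne.symm hne)) h.symm

theorem stmt6_general {X Z : Type*}
    (φ : X → Z)
    (E : Set (Set X))
    (hchain : IsChain (· ⊆ ·) E)
    (hdenseE : ∀ B ∈ E, ∀ B' ∈ E, B ⊂ B' → ∃ A ∈ E, B ⊂ A ∧ A ⊂ B')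
    (D : Set (Set X))
    (hDdense : ∀ B ∈ E, ∀ B' ∈ E, B ⊂ B' → ∃ A ∈ D, B ⊆ A ∧ A ⊆ B')
    (hsat : ∀ A ∈ D, A = φ ⁻¹' (φ '' A)) :
    ∀ B ∈ E, ∀ B' ∈ E, B ≠ B' → φ '' B ≠ φ '' B' :=
  fun _ hB _ hB' hne h ↦
    hne (injOn_image_of_saturated_orderDense φ hchain hdenseE hDdense hsat hB hB' h)

/-- Under a countable-rank map `φ`, the images of the members of a dense
uncountable chain of clopen sets (with a countable order-dense saturated
subfamily) are pairwise distinct. -/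
theorem stmt6 {X Z : Type*} [TopologicalSpace X] [CompactSpace X] [T2Space X]
    [TopologicalSpace Z] [CompactSpace Z] [MetrizableSpace Z]
    (φ : X → Z) (hφc : Continuous φ) (hφs : Function.Surjective φ)
    (hL : {y : Z | ∃ x x' : X, φ x = y ∧ φ x' = y ∧ x ≠ x'}.Countable)
    (E : Set (Set X)) (hE : ∀ B ∈ E, IsClopen B)
    (hchain : IsChain (· ⊆ ·) E) (hunc : ¬ E.Countable)
    (hdenseE : ∀ B ∈ E, ∀ B' ∈ E, B ⊂ B' → ∃ A ∈ E, B ⊂ A ∧ A ⊂ B')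
    (D : Set (Set X)) (hDE : D ⊆ E) (hDc : D.Countable)
    (hDdense : ∀ B ∈ E, ∀ B' ∈ E, B ⊂ B' → ∃ A ∈ D, B ⊆ A ∧ A ⊆ B')
    (hsat : ∀ A ∈ D, A = φ ⁻¹' (φ '' A)) :
    ∀ B ∈ E, ∀ B' ∈ E, B ≠ B' → φ '' B ≠ φ '' B' :=
  stmt6_general φ E hchain hdenseE D hDdense hsat
end

section
/- Let X and Y be compact Hausdorff spaces, f : X → Y a homeomorphism, and suppose X, Y are both embedded as closed subspaces of a product ∏_{ξ<ω₁} K_ξ of compact metrizable spaces. Then there is a closed unbounded set of α < ω₁ such that f descends to the α-projections: there is a homeomorphism f_α : π_α(X) → π_α(Y) with π_α ∘ f = f_α ∘ π_α ↾ X, where π_α is projection onto the first α coordinates. -/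
open Set

/-- The first uncountable ordinal. -/
noncomputable def omega1 : Ordinal := (Cardinal.aleph 1).ord

/-- Projection onto the first `α` coordinates of a product indexed by `{ξ // ξ < β}`. -/
def projTo (K : Ordinal → Type*) {α β : Ordinal} (h : α ≤ β)
    (x : ∀ ξ : {ξ : Ordinal // ξ < β}, K ξ) : ∀ ξ : {ξ : Ordinal // ξ < α}, K ξ :=
  fun ξ => x ⟨ξ.1, lt_of_lt_of_le ξ.2 h⟩

/-- A club (closed unbounded) subset of `ω₁`. -/
def IsClubIn (C : Set Ordinal) : Prop :=
  (∀ α ∈ C, α < omega1) ∧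
  (∀ β < omega1, ∃ α ∈ C, β < α) ∧
  (∀ β, β < omega1 → 0 < β → (∀ γ < β, ∃ α ∈ C, γ < α ∧ α < β) → β ∈ C)

/-!
Each coordinate `ξ` of `f` is a continuous map from the compact set `X` to the metrizable space
`K ξ`, so it depends on countably many coordinates only, all below some `α < ω₁`. As `ω₁` has
uncountable cofinality, closing off under these bounds (for `f` and `f⁻¹` at once) yields a club
of `α` such that `f` and `f⁻¹` preserve agreement below `α`. For such `α` the projections of `X`
and `Y` onto their `α`-images are quotient maps (compact onto Hausdorff), so `f` and `f⁻¹`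
descend to mutually inverse continuous maps.
-/

open Topology

section CountableDependence

variable {ι : Type*} {K : ι → Type*} [∀ i, TopologicalSpace (K i)] {X : Set (∀ i, K i)}
  {M : Type*}

theorem IsCompact.exists_finite_forall_dist_lt [PseudoMetricSpace M] (hX : IsCompact X)
    {F : X → M} (hF : Continuous F) {ε : ℝ} (hε : 0 < ε) :
    ∃ S : Set ι, S.Finite ∧ ∀ x x' : X, (∀ i ∈ S, x.1 i = x'.1 i) → dist (F x) (F x') < ε := by
  have hloc : ∀ x : X, ∃ I : Set ι, I.Finite ∧ ∃ u : ∀ i, Set (K i), (∀ i, u i ∈ 𝓝 (x.1 i)) ∧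
      ∀ z : X, z.1 ∈ I.pi u → dist (F z) (F x) < ε / 2 := by
    intro x
    obtain ⟨v, hv, hvF⟩ := (mem_nhds_subtype _ _ _).mp
      (hF.continuousAt.preimage_mem_nhds (Metric.ball_mem_nhds (F x) (half_pos hε)))
    rw [nhds_pi, Filter.mem_pi] at hv
    obtain ⟨I, hI, u, hu, hIu⟩ := hv
    exact ⟨I, hI, u, hu, fun z hz => hvF (hIu hz)⟩
  choose I hI u hu hIu using hloc
  obtain ⟨t, ht⟩ := hX.elim_nhds_subcover' (fun x hx => (I ⟨x, hx⟩).pi (u ⟨x, hx⟩))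
    (fun x hx => set_pi_mem_nhds (hI _) fun i _ => hu ⟨x, hx⟩ i)
  refine ⟨⋃ z ∈ t, I z, t.finite_toSet.biUnion fun z _ => hI z, fun x x' hxx' => ?_⟩
  obtain ⟨z, hzt, hxz⟩ := mem_iUnion₂.mp (ht x.2)
  have hx'z : x'.1 ∈ (I z).pi (u z) := fun i hi => hxx' i (mem_biUnion hzt hi) ▸ hxz i hi
  calc dist (F x) (F x') ≤ dist (F x) (F z) + dist (F x') (F z) := dist_triangle_right _ _ _
    _ < ε / 2 + ε / 2 := add_lt_add (hIu z x hxz) (hIu z x' hx'z)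
    _ = ε := add_halves ε

theorem IsCompact.exists_countable_forall_eq [MetricSpace M] (hX : IsCompact X)
    {F : X → M} (hF : Continuous F) :
    ∃ S : Set ι, S.Countable ∧ ∀ x x' : X, (∀ i ∈ S, x.1 i = x'.1 i) → F x = F x' := by
  choose S hS hSF using fun n : ℕ =>
    hX.exists_finite_forall_dist_lt hF (Nat.one_div_pos_of_nat (n := n))
  refine ⟨⋃ n, S n, countable_iUnion fun n => (hS n).countable,
    fun x x' hxx' => eq_of_forall_dist_le fun ε hε => ?_⟩
  obtain ⟨n, hn⟩ := exists_nat_one_div_lt hε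
  exact (hSF n x x' fun i hi => hxx' i (mem_iUnion_of_mem n hi)).le.trans hn.le

end CountableDependence

namespace Topology.IsQuotientMap

variable {A A' B B' : Type*} [TopologicalSpace A] [TopologicalSpace A'] [TopologicalSpace B]
  [TopologicalSpace B'] {p : A → B} {q : A' → B'}

theorem exists_homeomorph_comp_eq (hp : IsQuotientMap p) (hq : IsQuotientMap q) (f : A ≃ₜ A')
    (hf : ∀ a a', p a = p a' → q (f a) = q (f a'))
    (hf' : ∀ b b', q b = q b' → p (f.symm b) = p (f.symm b')) :
    ∃ g : B ≃ₜ B', ∀ a, g (p a) = q (f a) := by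
  let p' : C(A, B) := ⟨p, hp.continuous⟩
  let q' : C(A', B') := ⟨q, hq.continuous⟩
  have hp' : IsQuotientMap p' := hp
  have hq' : IsQuotientMap q' := hq
  have hpf : Function.FactorsThrough (q'.comp f) p' := fun a a' h => hf a a' h
  have hqf : Function.FactorsThrough (p'.comp f.symm) q' := fun b b' h => hf' b b' h
  let φ := hp'.lift (q'.comp f) hpf
  let ψ := hq'.lift (p'.comp f.symm) hqf
  have hφ (a : A) : φ (p a) = q (f a) := DFunLike.congr_fun (hp'.lift_comp _ hpf) a
  have hψ (b : A') : ψ (q b) = p (f.symm b) := DFunLike.congr_fun (hq'.lift_comp _ hqf) b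
  refine ⟨⟨⟨φ, ψ, hp.surjective.forall.mpr fun a => ?_, hq.surjective.forall.mpr fun b => ?_⟩,
    φ.continuous, ψ.continuous⟩, hφ⟩
  · simp only [hφ, hψ, Homeomorph.symm_apply_apply]
  · simp only [hψ, hφ, Homeomorph.apply_symm_apply]

end Topology.IsQuotientMap

theorem IsCompact.isQuotientMap_imageFactorization {Z W : Type*} [TopologicalSpace Z]
    [TopologicalSpace W] [T2Space W] {s : Set Z} (hs : IsCompact s) {f : Z → W}
    (hf : Continuous f) : IsQuotientMap (s.imageFactorization f) := by
  have : CompactSpace s := isCompact_iff_compactSpace.mp hs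
  have hcont : Continuous (s.imageFactorization f) := (hf.comp continuous_subtype_val).subtype_mk _
  exact hcont.isClosedMap.isQuotientMap hcont Set.imageFactorization_surjective

section Omega1

theorem omega1_eq_omega_one : omega1 = Ordinal.omega 1 := Cardinal.ord_aleph 1

theorem iSup_lt_omega1 {ι : Type*} [Countable ι] {f : ι → Ordinal} (hf : ∀ i, f i < omega1) :
    ⨆ i, f i < omega1 := by
  rw [omega1_eq_omega_one] at hf ⊢
  exact Ordinal.iSup_lt_omega_one hf

theorem succ_lt_omega1 {β : Ordinal} (hβ : β < omega1) : Order.succ β < omega1 :=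
  (Cardinal.isSuccLimit_ord (Cardinal.aleph0_le_aleph 1)).succ_lt hβ

theorem countable_Iio_of_lt_omega1 {γ : Ordinal} (hγ : γ < omega1) : (Iio γ).Countable := by
  rw [← Cardinal.le_aleph0_iff_set_countable, Cardinal.mk_Iio_ordinal, Cardinal.lift_le_aleph0,
    ← Cardinal.lt_aleph_one_iff]
  exact Cardinal.lt_ord.mp hγ

end Omega1

local notation "Ω" => {ξ : Ordinal // ξ < omega1}

section Club

variable {P : Ordinal → Ω → Prop}

theorem exists_forall_lt_of_forall_exists (hmono : ∀ ξ, Monotone (P · ξ))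
    (hex : ∀ ξ, ∃ α < omega1, P α ξ) (γ : Ω) : ∃ δ : Ω, ∀ ξ : Ω, ξ.1 < γ.1 → P δ.1 ξ := by
  choose a ha hP using hex
  have : Countable (Subtype.val ⁻¹' Iio γ.1 : Set Ω) :=
    ((countable_Iio_of_lt_omega1 γ.2).preimage Subtype.val_injective).to_subtype
  exact ⟨⟨⨆ ξ : (Subtype.val ⁻¹' Iio γ.1 : Set Ω), a ξ, iSup_lt_omega1 fun ξ => ha ξ⟩,
    fun ξ hξ => hmono ξ (Ordinal.le_iSup (fun ξ : (Subtype.val ⁻¹' Iio γ.1 : Set Ω) => a ξ)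
      ⟨ξ, hξ⟩) (hP ξ)⟩

theorem exists_gt_forall_lt (hmono : ∀ ξ, Monotone (P · ξ))
    (hnext : ∀ γ : Ω, ∃ δ : Ω, ∀ ξ : Ω, ξ.1 < γ.1 → P δ.1 ξ) {β : Ordinal} (hβ : β < omega1) :
    ∃ α, (α < omega1 ∧ ∀ ξ : Ω, ξ.1 < α → P α ξ) ∧ β < α := by
  choose next hnext using hnext
  let a (n : ℕ) : Ω := next^[n] ⟨Order.succ β, succ_lt_omega1 hβ⟩
  refine ⟨⨆ n, (a n).1, ⟨iSup_lt_omega1 fun n => (a n).2, fun ξ hξ => ?_⟩,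
    (Order.lt_succ β).trans_le (Ordinal.le_iSup (fun n => (a n).1) 0)⟩
  obtain ⟨n, hn⟩ := Ordinal.lt_iSup_iff.mp hξ
  have hP : P (a (n + 1)).1 ξ := by
    simpa only [a, Function.iterate_succ_apply'] using hnext (a n) ξ hn
  exact hmono ξ (Ordinal.le_iSup (fun n => (a n).1) (n + 1)) hP

theorem isClubIn_setOf_forall_lt (hmono : ∀ ξ, Monotone (P · ξ))
    (hex : ∀ ξ, ∃ α < omega1, P α ξ) :
    IsClubIn {α | α < omega1 ∧ ∀ ξ : Ω, ξ.1 < α → P α ξ} := by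
  refine ⟨fun α hα => hα.1,
    fun β hβ => exists_gt_forall_lt hmono (exists_forall_lt_of_forall_exists hmono hex) hβ,
    fun β hβ _ hlim => ⟨hβ, fun ξ hξ => ?_⟩⟩
  obtain ⟨α, hαC, hξα, hαβ⟩ := hlim ξ.1 hξ
  exact hmono ξ hαβ.le (hαC.2 ξ hξα)

end Club

section Descent

variable {K : Ordinal → Type*} {X Y : Set (∀ ξ : Ω, K ξ)}

def EqBelow (α : Ordinal) (x x' : ∀ ξ : Ω, K ξ) : Prop :=
  ∀ ξ : Ω, ξ.1 < α → x ξ = x' ξ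

theorem projTo_eq_projTo_iff {α : Ordinal} (h : α ≤ omega1) {x x' : ∀ ξ : Ω, K ξ} :
    projTo K h x = projTo K h x' ↔ EqBelow α x x' :=
  ⟨fun he ξ hξ => congrFun he ⟨ξ.1, hξ⟩,
    fun he => funext fun ξ => he ⟨ξ.1, ξ.2.trans_le h⟩ ξ.2⟩

theorem continuous_projTo [∀ ξ, TopologicalSpace (K ξ)] {α : Ordinal} (h : α ≤ omega1) :
    Continuous (projTo K h) :=
  continuous_pi fun _ => continuous_apply _

def DeterminedBelow (F : X → Y) (α : Ordinal) (ξ : Ω) : Prop :=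
  ∀ x x' : X, EqBelow α x.1 x'.1 → (F x).1 ξ = (F x').1 ξ

theorem DeterminedBelow.monotone (F : X → Y) (ξ : Ω) : Monotone (DeterminedBelow F · ξ) :=
  fun _ _ h hF x x' hxx' => hF x x' fun ζ hζ => hxx' ζ (hζ.trans_le h)

theorem exists_determinedBelow [∀ ξ, TopologicalSpace (K ξ)] (hX : IsCompact X) {F : X → Y}
    (hF : Continuous F) (ξ : Ω) [TopologicalSpace.MetrizableSpace (K ξ)] :
    ∃ α < omega1, DeterminedBelow F α ξ := by
  let _ : MetricSpace (K ξ) := TopologicalSpace.metrizableSpaceMetric (K ξ)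
  obtain ⟨S, hS, hSF⟩ := hX.exists_countable_forall_eq
    ((continuous_apply ξ).comp (continuous_subtype_val.comp hF))
  have := hS.to_subtype
  refine ⟨⨆ ζ : S, Order.succ ζ.1.1, iSup_lt_omega1 fun ζ => succ_lt_omega1 ζ.1.2,
    fun x x' hxx' => hSF x x' fun ζ hζ => hxx' ζ ?_⟩
  exact (Order.lt_succ _).trans_le (Ordinal.le_iSup (fun ζ : S => Order.succ ζ.1.1) ⟨ζ, hζ⟩)

theorem imageFactorization_projTo_eq_of_determinedBelow {α : Ordinal} (h : α ≤ omega1)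
    {F : X → Y} (hF : ∀ ξ : Ω, ξ.1 < α → DeterminedBelow F α ξ) {x x' : X}
    (hxx' : X.imageFactorization (projTo K h) x = X.imageFactorization (projTo K h) x') :
    Y.imageFactorization (projTo K h) (F x) = Y.imageFactorization (projTo K h) (F x') :=
  Subtype.ext <| (projTo_eq_projTo_iff h).mpr fun ξ hξ =>
    hF ξ hξ x x' ((projTo_eq_projTo_iff h).mp (congrArg Subtype.val hxx'))

end Descent

/-- A homeomorphism between closed subspaces of an `ω₁`-indexed product of
compact metrizable spaces descends to the `α`-projections for a club of `α`. -/
theorem stmt9 (K : Ordinal → Type) [∀ ξ, TopologicalSpace (K ξ)]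
    [∀ ξ, CompactSpace (K ξ)] [∀ ξ, TopologicalSpace.MetrizableSpace (K ξ)]
    (X Y : Set (∀ ξ : {ξ : Ordinal // ξ < omega1}, K ξ))
    (hX : IsClosed X) (hY : IsClosed Y) (f : X ≃ₜ Y) :
    ∃ C : Set Ordinal, IsClubIn C ∧
      ∀ α ∈ C, ∀ h : α ≤ omega1,
        ∃ g : (projTo K h '' X) ≃ₜ (projTo K h '' Y),
          ∀ x : X, (g ⟨projTo K h x.1, mem_image_of_mem _ x.2⟩ : _).1
            = projTo K h (f x).1 := by
  have hex (ξ : Ω) : ∃ α < omega1, DeterminedBelow f α ξ ∧ DeterminedBelow f.symm α ξ := by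
    obtain ⟨α, hα, hfα⟩ := exists_determinedBelow hX.isCompact f.continuous ξ
    obtain ⟨α', hα', hfα'⟩ := exists_determinedBelow hY.isCompact f.symm.continuous ξ
    exact ⟨max α α', max_lt hα hα', DeterminedBelow.monotone _ ξ (le_max_left α α') hfα,
      DeterminedBelow.monotone _ ξ (le_max_right α α') hfα'⟩
  have hmono (ξ : Ω) : Monotone (fun α => DeterminedBelow f α ξ ∧ DeterminedBelow f.symm α ξ) :=
    fun _ _ hle hα => ⟨DeterminedBelow.monotone f ξ hle hα.1,
      DeterminedBelow.monotone f.symm ξ hle hα.2⟩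
  refine ⟨_, isClubIn_setOf_forall_lt hmono hex, ?_⟩
  rintro α ⟨-, hα⟩ h
  have hp := hX.isCompact.isQuotientMap_imageFactorization (continuous_projTo (K := K) h)
  have hq := hY.isCompact.isQuotientMap_imageFactorization (continuous_projTo (K := K) h)
  obtain ⟨g, hg⟩ := hp.exists_homeomorph_comp_eq hq f
    (fun _ _ => imageFactorization_projTo_eq_of_determinedBelow h fun ξ hξ => (hα ξ hξ).1)
    (fun _ _ => imageFactorization_projTo_eq_of_determinedBelow h fun ξ hξ => (hα ξ hξ).2)
  exact ⟨g, fun x => congrArg Subtype.val (hg x)⟩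
end

section
/- Let X ⊆ ∏_{ξ<ω₁} K_ξ be a closed subspace of a product of compact metrizable spaces, F ⊆ X compact. Then there exists α < ω₁ such that F = X ∩ π_α⁻¹(π_α(F)), where π_α is the projection onto the first α coordinates. -/
/-!
Cover `X \ F` by basic open cylinders missing the closed set `F`; each cylinder depends on finitely
many coordinates. Since `X \ F` is Lindelöf, countably many cylinders suffice, so countably many
coordinates decide membership in `F` for points of `X`. A countable set of countable ordinals is
bounded below `ω₁`, which gives `α`.
-/

open Set Topology
open scoped Ordinal

theorem isLindelof_of_subset_of_hereditarilyLindelofSpace {Y : Type*} [TopologicalSpace Y]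
    {S T : Set Y} [HereditarilyLindelofSpace S] (hTS : T ⊆ S) : IsLindelof T := by
  have h := IsInducing.subtypeVal.isLindelof_iff.1
    (HereditarilyLindelofSpace.isLindelof (Subtype.val ⁻¹' T : Set S))
  rwa [Subtype.image_preimage_coe, inter_eq_self_of_subset_right hTS] at h

theorem IsLindelof.exists_countable_coords_mem_of_subset {ι : Type*} {π : ι → Type*}
    [∀ i, TopologicalSpace (π i)] {S U : Set (∀ i, π i)} (hS : IsLindelof S) (hU : IsOpen U)
    (hSU : S ⊆ U) :
    ∃ T : Set ι, T.Countable ∧ ∀ y ∈ S, ∀ z, (∀ i ∈ T, z i = y i) → z ∈ U := by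
  have hcyl : ∀ y : S, ∃ (I : Finset ι) (u : ∀ i, Set (π i)),
      (∀ i ∈ I, IsOpen (u i) ∧ y.1 i ∈ u i) ∧ (I : Set ι).pi u ⊆ U :=
    fun y => isOpen_pi_iff.1 hU y.1 (hSU y.2)
  choose I u hu hIU using hcyl
  obtain ⟨t, htc, hcover⟩ := hS.elim_countable_subcover (fun y => (I y : Set ι).pi (u y))
    (fun y => isOpen_set_pi (I y).finite_toSet fun i hi => (hu y i hi).1)
    (fun y hy => mem_iUnion.2 ⟨⟨y, hy⟩, fun i hi => (hu _ i hi).2⟩)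
  refine ⟨⋃ y ∈ t, (I y : Set ι), htc.biUnion fun y _ => (I y).countable_toSet, ?_⟩
  intro y hy z hzy
  obtain ⟨y', hy't, hyy'⟩ := mem_iUnion₂.1 (hcover hy)
  refine hIU y' fun i hi => ?_
  rw [hzy i (mem_biUnion hy't hi)]
  exact hyy' i hi

theorem Ordinal.exists_lt_omega_one_forall_lt_of_countable {T : Set Ordinal} (hT : T.Countable)
    (hTω : ∀ ξ ∈ T, ξ < ω₁) : ∃ α < ω₁, ∀ ξ ∈ T, ξ < α := by
  have : Countable T := hT.to_subtype
  refine ⟨⨆ ξ : T, Order.succ ξ.1, Ordinal.iSup_lt_omega_one fun ξ => ?_, fun ξ hξ => ?_⟩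
  · exact (Cardinal.isSuccLimit_omega 1).succ_lt (hTω ξ ξ.2)
  · exact (Order.lt_succ ξ).trans_le
      (Ordinal.le_iSup (fun ξ : T => Order.succ ξ.1) ⟨ξ, hξ⟩)

theorem stmt16_general (K : Ordinal → Type) [∀ ξ, TopologicalSpace (K ξ)]
    [∀ ξ, TopologicalSpace.MetrizableSpace (K ξ)]
    (X : Set (∀ ξ : {ξ : Ordinal // ξ < omega1}, K ξ))
    (hHL : HereditarilyLindelofSpace X)
    (F : Set (∀ ξ : {ξ : Ordinal // ξ < omega1}, K ξ))
    (hFX : F ⊆ X) (hF : IsCompact F) :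
    ∃ α : Ordinal, α < omega1 ∧ ∀ h : α ≤ omega1,
      F = X ∩ (projTo K h) ⁻¹' (projTo K h '' F) := by
  have hXF : IsLindelof (X \ F) := isLindelof_of_subset_of_hereditarilyLindelofSpace sdiff_subset
  obtain ⟨T, hTc, hT⟩ :=
    hXF.exists_countable_coords_mem_of_subset hF.isClosed.isOpen_compl fun y hy => hy.2
  have hω : omega1 = ω₁ := Cardinal.ord_aleph 1
  obtain ⟨α, hα, hTα⟩ := Ordinal.exists_lt_omega_one_forall_lt_of_countable (hTc.image Subtype.val)
    (by rintro _ ⟨ξ, -, rfl⟩; exact hω ▸ ξ.2)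
  refine ⟨α, hω ▸ hα, fun h => Subset.antisymm (fun y hy => ⟨hFX hy, y, hy, rfl⟩) ?_⟩
  rintro y ⟨hyX, f, hfF, hfy⟩
  by_contra hyF
  exact hT y ⟨hyX, hyF⟩ f (fun ξ hξ => congrFun hfy ⟨ξ.1, hTα _ (mem_image_of_mem _ hξ)⟩) hfF

/-- Every closed subset of a hereditarily Lindelöf closed subspace of an
`ω₁`-indexed product of compact metrizable spaces depends on countably many
coordinates. -/
theorem stmt16 (K : Ordinal → Type) [∀ ξ, TopologicalSpace (K ξ)]
    [∀ ξ, CompactSpace (K ξ)] [∀ ξ, TopologicalSpace.MetrizableSpace (K ξ)]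
    (X : Set (∀ ξ : {ξ : Ordinal // ξ < omega1}, K ξ)) (hX : IsClosed X)
    (hHL : HereditarilyLindelofSpace X)
    (F : Set (∀ ξ : {ξ : Ordinal // ξ < omega1}, K ξ))
    (hFX : F ⊆ X) (hF : IsCompact F) :
    ∃ α : Ordinal, α < omega1 ∧ ∀ h : α ≤ omega1,
      F = X ∩ (projTo K h) ⁻¹' (projTo K h '' F) :=
  stmt16_general K X hHL F hFX hF
end
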